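/- arXiv:1502.02178 — 2 statements merged into one kernel-verified Lean document; each statement's English description precedes it below -/
import Mathlib

section
/- Let v_1,…,v_n be monotone submodular valuations, and run the greedy algorithm with any fixed item order, assigning each item to a bidder with maximal marginal value. Fix an allocation OPT = (OPT_1,…,OPT_n). Let OPT^t denote Σ_i v_i(OPT_i ∩ {remaining items after step t} | S_i^t) and let ROG(j) be the welfare gain at the step processing item j. If item j (belonging to OPT_{O(j)}) is assigned to bidder O(j), then OPT^{t−1} − OPT^t ≤ ROG(j); if j is assigned to some i ≠ O(j), then OPT^{t−1} − OPT^t ≤ ROG(j) + v_{O(j)}(j | S_{O(j)}^{t−1}). -/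
open Finset

/-- The vertex cover function of a graph `G`: the number of edges of `G`
with at least one endpoint in `S`. -/
noncomputable def vcFun {V : Type*} [Fintype V] (G : SimpleGraph V) (S : Finset V) : ℕ :=
  Set.ncard {e ∈ G.edgeSet | ∃ x ∈ S, x ∈ e}

/-- Marginal value of item `j` given bundle `S`. -/
def marg {m : ℕ} (v : Finset (Fin m) → ℚ) (j : Fin m) (S : Finset (Fin m)) : ℚ :=
  v (insert j S) - v S

/-- The bundle of bidder `i` after the first `t` steps of the greedy algorithm, when
items are processed in the order `σ` (item `j` is processed at step `σ.symm j + 1`)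
and item `j` is assigned to bidder `A j`. -/
def gBundle {m n : ℕ} (σ : Equiv.Perm (Fin m)) (A : Fin m → Fin n) (i : Fin n)
    (t : ℕ) : Finset (Fin m) :=
  Finset.univ.filter (fun j => A j = i ∧ (σ.symm j : ℕ) < t)

/-- The assignment `A` is a run of the greedy algorithm with item order `σ` and
valuations `v`: each item is given to a bidder whose marginal value for it
(at the time it is processed) is maximal. -/
def IsGreedy {m n : ℕ} (v : Fin n → Finset (Fin m) → ℚ) (σ : Equiv.Perm (Fin m))
    (A : Fin m → Fin n) : Prop :=
  ∀ j : Fin m, ∀ i : Fin n,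
    marg (v i) j (gBundle σ A i (σ.symm j)) ≤
      marg (v (A j)) j (gBundle σ A (A j) (σ.symm j))

/-- The set of items assigned to bidder `i` in the allocation `OPT` described by the
ownership function `O`. -/
def optSet {m n : ℕ} (O : Fin m → Fin n) (i : Fin n) : Finset (Fin m) :=
  Finset.univ.filter (fun j => O j = i)

/-- The items remaining (not yet processed) after the first `t` steps. -/
def remaining {m : ℕ} (σ : Equiv.Perm (Fin m)) (t : ℕ) : Finset (Fin m) :=
  Finset.univ.filter (fun j => t ≤ (σ.symm j : ℕ))

/-- `OPT^t`: the marginal value of the optimal allocation restricted to the remaining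
items, given the current bundles. -/
def optMarg {m n : ℕ} (v : Fin n → Finset (Fin m) → ℚ) (σ : Equiv.Perm (Fin m))
    (A : Fin m → Fin n) (O : Fin m → Fin n) (t : ℕ) : ℚ :=
  ∑ i : Fin n, (v i ((optSet O i ∩ remaining σ t) ∪ gBundle σ A i t)
    - v i (gBundle σ A i t))

/-- The welfare gain of the greedy algorithm at step `t + 1`. -/
def rog {m n : ℕ} (v : Fin n → Finset (Fin m) → ℚ) (σ : Equiv.Perm (Fin m))
    (A : Fin m → Fin n) (t : ℕ) : ℚ :=
  (∑ i : Fin n, v i (gBundle σ A i (t + 1))) - ∑ i : Fin n, v i (gBundle σ A i t)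

/-- For greedy with any fixed item order on monotone normalized submodular valuations:
if item `j` is assigned to its OPT-owner `O j` then `OPT^{t-1} - OPT^t ≤ ROG(j)`;
otherwise `OPT^{t-1} - OPT^t ≤ ROG(j) + v_{O(j)}(j | S_{O(j)}^{t-1})`. -/
theorem greedy_loss_bound (m n : ℕ) (v : Fin n → Finset (Fin m) → ℚ)
    (hmono : ∀ i, ∀ S T : Finset (Fin m), S ⊆ T → v i S ≤ v i T)
    (hsub : ∀ i, ∀ S T : Finset (Fin m), S ⊆ T → ∀ j : Fin m,
      marg (v i) j T ≤ marg (v i) j S)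
    (hnorm : ∀ i, v i ∅ = 0)
    (σ : Equiv.Perm (Fin m)) (A : Fin m → Fin n) (hA : IsGreedy v σ A)
    (O : Fin m → Fin n) (j : Fin m) :
    (A j = O j →
      optMarg v σ A O (σ.symm j) - optMarg v σ A O ((σ.symm j : ℕ) + 1)
        ≤ rog v σ A (σ.symm j))
    ∧ (A j ≠ O j →
      optMarg v σ A O (σ.symm j) - optMarg v σ A O ((σ.symm j : ℕ) + 1)
        ≤ rog v σ A (σ.symm j)
          + marg (v (O j)) j (gBundle σ A (O j) (σ.symm j))) := by
  classical
  set t : ℕ := (σ.symm j : ℕ) with ht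
  have hkj : ∀ k : Fin m, ((σ.symm k : ℕ) = t) ↔ k = j := by
    intro k
    constructor
    · intro h
      have h2 : σ.symm k = σ.symm j := Fin.ext (h.trans ht)
      exact σ.symm.injective h2
    · rintro rfl; exact ht.symm
  have hS' : ∀ i, gBundle σ A i (t + 1) =
      if A j = i then insert j (gBundle σ A i t) else gBundle σ A i t := by
    intro i
    split_ifs with hi
    · ext k
      simp only [gBundle, mem_filter, mem_univ, true_and, mem_insert]
      by_cases hk : k = j
      · subst hk
        constructor
        · intro _; exact Or.inl rfl
        · intro _; exact ⟨hi, by omega⟩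
      · have hne : (σ.symm k : ℕ) ≠ t := fun h => hk ((hkj k).1 h)
        constructor
        · rintro ⟨h1, h2⟩; exact Or.inr ⟨h1, by omega⟩
        · rintro (rfl | ⟨h1, h2⟩)
          · exact absurd rfl hk
          · exact ⟨h1, by omega⟩
    · ext k
      simp only [gBundle, mem_filter, mem_univ, true_and]
      by_cases hk : k = j
      · subst hk
        constructor <;> rintro ⟨h1, _⟩ <;> exact absurd h1 hi
      · have hne : (σ.symm k : ℕ) ≠ t := fun h => hk ((hkj k).1 h)
        constructor <;> rintro ⟨h1, h2⟩ <;> exact ⟨h1, by omega⟩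
  have hT' : ∀ i, optSet O i ∩ remaining σ (t + 1)
      = (optSet O i ∩ remaining σ t).erase j := by
    intro i
    ext k
    simp only [optSet, remaining, mem_inter, mem_filter, mem_univ, true_and, mem_erase]
    by_cases hk : k = j
    · subst hk
      constructor
      · rintro ⟨_, h2⟩; omega
      · rintro ⟨h, _⟩; exact absurd rfl h
    · have hne : (σ.symm k : ℕ) ≠ t := fun h => hk ((hkj k).1 h)
      constructor
      · rintro ⟨h1, h2⟩; exact ⟨hk, h1, by omega⟩
      · rintro ⟨_, h1, h2⟩; exact ⟨h1, by omega⟩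
  have hjS : ∀ i, j ∉ gBundle σ A i t := by
    intro i
    simp only [gBundle, mem_filter, mem_univ, true_and, not_and]
    intro _; omega
  have hjT : j ∈ optSet O (O j) ∩ remaining σ t := by
    simp only [optSet, remaining, mem_inter, mem_filter, mem_univ, true_and]
    omega
  have hjTn : ∀ i, i ≠ O j → j ∉ optSet O i ∩ remaining σ t := by
    intro i hi
    simp only [optSet, remaining, mem_inter, mem_filter, mem_univ, true_and, not_and]
    intro h; exact absurd h.symm hi
  have e1 : optMarg v σ A O t - optMarg v σ A O (t + 1) - rog v σ A t
      = ∑ i : Fin n, (v i ((optSet O i ∩ remaining σ t) ∪ gBundle σ A i t)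
          - v i ((optSet O i ∩ remaining σ (t + 1)) ∪ gBundle σ A i (t + 1))) := by
    simp only [optMarg, rog, ← Finset.sum_sub_distrib]
    exact Finset.sum_congr rfl fun i _ => by ring
  constructor
  · intro hAO
    have hterm : ∀ i ∈ (Finset.univ : Finset (Fin n)),
        v i ((optSet O i ∩ remaining σ t) ∪ gBundle σ A i t)
          - v i ((optSet O i ∩ remaining σ (t + 1)) ∪ gBundle σ A i (t + 1)) ≤ 0 := by
      intro i _
      rw [hT' i, hS' i]
      by_cases hi : A j = i
      · rw [if_pos hi]
        have hjTi : j ∈ optSet O i ∩ remaining σ t := by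
          rw [← hi, hAO] at *; exact hjT
        have hsets : ((optSet O i ∩ remaining σ t).erase j) ∪ insert j (gBundle σ A i t)
            = (optSet O i ∩ remaining σ t) ∪ gBundle σ A i t := by
          rw [Finset.union_insert, ← Finset.insert_union, Finset.insert_erase hjTi]
        rw [hsets]; simp
      · rw [if_neg hi]
        have hjn : j ∉ optSet O i ∩ remaining σ t := by
          apply hjTn; intro h; exact hi (h ▸ hAO)
        rw [Finset.erase_eq_of_notMem hjn]; simp
    have hsum := Finset.sum_nonpos hterm
    linarith [e1]
  · intro hAO
    have hterm : ∀ i ∈ (Finset.univ : Finset (Fin n)),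
        v i ((optSet O i ∩ remaining σ t) ∪ gBundle σ A i t)
          - v i ((optSet O i ∩ remaining σ (t + 1)) ∪ gBundle σ A i (t + 1))
        ≤ if i = O j then marg (v (O j)) j (gBundle σ A (O j) t) else 0 := by
      intro i _
      rw [hT' i, hS' i]
      by_cases hb : i = O j
      · rw [hb, if_pos rfl, if_neg hAO]
        have hsets : (optSet O (O j) ∩ remaining σ t) ∪ gBundle σ A (O j) t
            = insert j (((optSet O (O j) ∩ remaining σ t).erase j) ∪ gBundle σ A (O j) t) := by
          rw [← Finset.insert_union, Finset.insert_erase hjT]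
        rw [hsets]
        have := hsub (O j) (gBundle σ A (O j) t)
          (((optSet O (O j) ∩ remaining σ t).erase j) ∪ gBundle σ A (O j) t)
          Finset.subset_union_right j
        simpa [marg] using this
      · rw [if_neg hb]
        have hjn : j ∉ optSet O i ∩ remaining σ t := hjTn i hb
        rw [Finset.erase_eq_of_notMem hjn]
        by_cases hi : A j = i
        · rw [if_pos hi]
          have := hmono i ((optSet O i ∩ remaining σ t) ∪ gBundle σ A i t)
            ((optSet O i ∩ remaining σ t) ∪ insert j (gBundle σ A i t))
            (Finset.union_subset_union_right (Finset.subset_insert j _))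
          linarith
        · rw [if_neg hi]; simp
    have hsum := Finset.sum_le_sum hterm
    rw [Finset.sum_ite_eq' Finset.univ (O j)
      (fun _ => marg (v (O j)) j (gBundle σ A (O j) t))] at hsum
    simp only [Finset.mem_univ, if_pos] at hsum
    linarith [e1]
end

section
/- Let the greedy algorithm (any item order) run on monotone submodular valuations v_1,…,v_n, and fix an allocation OPT. For each item j let b_O(j) = v_{O(j)}({j}) − v_{O(j)}(j | S_{O(j)}^{t−1}) be the decrease in j's marginal value for its OPT-owner at the time j is processed. Then Σ_j b_O(j) ≥ Σ_j v_{O(j)}({j}) − ALG, where ALG is the final welfare; in particular if the v_i are vertex cover functions then Σ_j b_O(j) ≥ OPT − ALG. -/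
open Finset

lemma gBundle_succ {m n : ℕ} (σ : Equiv.Perm (Fin m)) (A : Fin m → Fin n)
    (t : ℕ) (ht : t < m) (i : Fin n) :
    gBundle σ A i (t + 1) =
      if A (σ ⟨t, ht⟩) = i then insert (σ ⟨t, ht⟩) (gBundle σ A i t)
      else gBundle σ A i t := by
  have key : ∀ j : Fin m, (σ.symm j : ℕ) = t ↔ j = σ ⟨t, ht⟩ := by
    intro j
    constructor
    · intro h
      have : σ.symm j = ⟨t, ht⟩ := Fin.ext h
      rw [← this]; simp
    · intro h; subst h; simp
  split_ifs with h
  · ext j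
    simp only [gBundle, mem_filter, mem_univ, true_and, mem_insert]
    constructor
    · rintro ⟨hAj, hlt⟩
      rcases Nat.lt_succ_iff_lt_or_eq.mp hlt with h' | h'
      · exact Or.inr ⟨hAj, h'⟩
      · exact Or.inl ((key j).mp h')
    · rintro (rfl | ⟨hAj, hlt⟩)
      · refine ⟨h, ?_⟩; simp
      · exact ⟨hAj, Nat.lt_succ_of_lt hlt⟩
  · ext j
    simp only [gBundle, mem_filter, mem_univ, true_and]
    constructor
    · rintro ⟨hAj, hlt⟩
      rcases Nat.lt_succ_iff_lt_or_eq.mp hlt with h' | h'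
      · exact ⟨hAj, h'⟩
      · exact absurd (((key j).mp h') ▸ hAj) h
    · rintro ⟨hAj, hlt⟩
      exact ⟨hAj, Nat.lt_succ_of_lt hlt⟩

lemma sigma_t_not_mem {m n : ℕ} (σ : Equiv.Perm (Fin m)) (A : Fin m → Fin n)
    (t : ℕ) (ht : t < m) (i : Fin n) : σ ⟨t, ht⟩ ∉ gBundle σ A i t := by
  simp [gBundle]

lemma welfare_eq {m n : ℕ} (v : Fin n → Finset (Fin m) → ℚ)
    (hnorm : ∀ i, v i ∅ = 0) (σ : Equiv.Perm (Fin m)) (A : Fin m → Fin n) :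
    ∑ i : Fin n, v i (gBundle σ A i m)
      = ∑ j : Fin m, marg (v (A j)) j (gBundle σ A (A j) (σ.symm j)) := by
  set f : ℕ → ℚ := fun t =>
    if h : t < m then
      marg (v (A (σ ⟨t, h⟩))) (σ ⟨t, h⟩) (gBundle σ A (A (σ ⟨t, h⟩)) t) else 0 with hf
  have H : ∀ T : ℕ, T ≤ m →
      ∑ i : Fin n, v i (gBundle σ A i T) = ∑ t ∈ Finset.range T, f t := by
    intro T
    induction T with
    | zero =>
      intro _
      have : ∀ i : Fin n, gBundle σ A i 0 = ∅ := by intro i; simp [gBundle]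
      simp [this, hnorm]
    | succ T ih =>
      intro hT
      have hTm : T < m := hT
      rw [Finset.sum_range_succ, ← ih (le_of_lt hTm)]
      simp only [hf]
      rw [dif_pos hTm]
      have step : ∀ i : Fin n, v i (gBundle σ A i (T + 1)) =
          v i (gBundle σ A i T) +
          (if A (σ ⟨T, hTm⟩) = i then
            marg (v i) (σ ⟨T, hTm⟩) (gBundle σ A i T) else 0) := by
        intro i
        rw [gBundle_succ σ A T hTm i]
        split_ifs with h
        · simp [marg]
        · simp
      rw [Finset.sum_congr rfl (fun i _ => step i), Finset.sum_add_distrib]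
      congr 1
      rw [Finset.sum_ite_eq]
      simp
  rw [H m le_rfl, ← Fin.sum_univ_eq_sum_range f m]
  have hfv : ∀ t : Fin m, f t =
      marg (v (A (σ t))) (σ t) (gBundle σ A (A (σ t)) t) := by
    intro t
    rw [hf]
    simp only [dif_pos t.isLt, Fin.eta]
  rw [Finset.sum_congr rfl (fun t _ => hfv t)]
  rw [← Equiv.sum_comp σ (fun j => marg (v (A j)) j (gBundle σ A (A j) (σ.symm j)))]
  exact Finset.sum_congr rfl (fun t _ => by rw [Equiv.symm_apply_apply])

lemma subadd {m : ℕ} (v : Finset (Fin m) → ℚ)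
    (hsub : ∀ S T : Finset (Fin m), S ⊆ T → ∀ j : Fin m, marg v j T ≤ marg v j S)
    (hnorm : v ∅ = 0) (S : Finset (Fin m)) : v S ≤ ∑ j ∈ S, v {j} := by
  induction S using Finset.induction with
  | empty => simp [hnorm]
  | @insert j S hj ih =>
    rw [Finset.sum_insert hj]
    have h1 : v (insert j S) = v S + marg v j S := by simp [marg]
    have h2 : marg v j S ≤ marg v j ∅ := hsub ∅ S (Finset.empty_subset S) j
    have h3 : marg v j ∅ = v {j} := by simp [marg, hnorm]
    linarith

/-- For greedy with any item order on monotone normalized submodular valuations, with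
`b_O(j) = v_{O(j)}({j}) - v_{O(j)}(j | S_{O(j)}^{t-1})`, we have
`Σ_j b_O(j) ≥ Σ_j v_{O(j)}({j}) - ALG`; in particular (as for vertex cover functions,
where the singleton values dominate the set values) `Σ_j b_O(j) ≥ OPT - ALG`. -/
theorem greedy_bO_bound (m n : ℕ) (v : Fin n → Finset (Fin m) → ℚ)
    (hmono : ∀ i, ∀ S T : Finset (Fin m), S ⊆ T → v i S ≤ v i T)
    (hsub : ∀ i, ∀ S T : Finset (Fin m), S ⊆ T → ∀ j : Fin m,
      marg (v i) j T ≤ marg (v i) j S)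
    (hnorm : ∀ i, v i ∅ = 0)
    (σ : Equiv.Perm (Fin m)) (A : Fin m → Fin n) (hA : IsGreedy v σ A)
    (O : Fin m → Fin n) :
    (∑ j : Fin m, (v (O j) {j} - marg (v (O j)) j (gBundle σ A (O j) (σ.symm j))))
        ≥ (∑ j : Fin m, v (O j) {j}) - ∑ i : Fin n, v i (gBundle σ A i m)
    ∧ (∑ j : Fin m, (v (O j) {j} - marg (v (O j)) j (gBundle σ A (O j) (σ.symm j))))
        ≥ (∑ i : Fin n, v i (optSet O i)) - ∑ i : Fin n, v i (gBundle σ A i m) := by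
  have halg : (∑ j : Fin m, marg (v (O j)) j (gBundle σ A (O j) (σ.symm j)))
      ≤ ∑ i : Fin n, v i (gBundle σ A i m) := by
    rw [welfare_eq v hnorm σ A]
    exact Finset.sum_le_sum (fun j _ => hA j (O j))
  have h1 : (∑ j : Fin m, (v (O j) {j} - marg (v (O j)) j (gBundle σ A (O j) (σ.symm j))))
      ≥ (∑ j : Fin m, v (O j) {j}) - ∑ i : Fin n, v i (gBundle σ A i m) := by
    rw [Finset.sum_sub_distrib]
    exact sub_le_sub_left halg _
  refine ⟨h1, le_trans ?_ h1⟩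
  have hopt : (∑ i : Fin n, v i (optSet O i)) ≤ ∑ j : Fin m, v (O j) {j} := by
    have h2 : ∀ i : Fin n, v i (optSet O i) ≤ ∑ j ∈ optSet O i, v (O j) {j} := by
      intro i
      calc v i (optSet O i) ≤ ∑ j ∈ optSet O i, v i {j} :=
            subadd (v i) (hsub i) (hnorm i) _
        _ = ∑ j ∈ optSet O i, v (O j) {j} := by
            refine Finset.sum_congr rfl (fun j hj => ?_)
            simp only [optSet, mem_filter] at hj
            rw [hj.2]
    calc (∑ i : Fin n, v i (optSet O i)) ≤ ∑ i : Fin n, ∑ j ∈ optSet O i, v (O j) {j} :=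
          Finset.sum_le_sum (fun i _ => h2 i)
      _ = ∑ j : Fin m, v (O j) {j} := by
          simp only [optSet]
          exact Finset.sum_fiberwise univ O (fun j => v (O j) {j})
  linarith
end
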